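/- arXiv:2605.07772 — 3 statements merged into one kernel-verified Lean document; each statement's English description precedes it below -/
import Mathlib

section
/- Let ν ∈ G_A^max, i.e., ν is a Borel probability measure on S whose support is contained in the set of global maximizers of W_ν on S. Then for every Borel probability measure η on S whose support is contained in the support of ν, one has I_A(ν) ≤ I_A(η). -/
/-! Expanding `exp` and the powers of `⟨x, A y⟩ = ∑ λᵢ xᵢ yᵢ` writes the kernel as a dominated
series `∑ c_p g_p(x) g_p(y)` of products of monomials with `c_p ≥ 0`; hence it is positive
definite in the form `2 ∫∫ K dν dη ≤ I(η) + I(ν)`. If `ν` sits on the maximizers of `W_ν`, then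
`W_ν` is constant on `supp ν ⊇ supp η`, so both `I(ν) = ∫ W_ν dν` and the cross term
`∫ W_ν dη` equal that constant, and the inequality reads `I(ν) ≤ I(η)`. -/

open MeasureTheory Real Filter Topology

noncomputable section

/-- The unit sphere `S = 𝕊^{d-1}` in `ℝ^d`. -/
abbrev Sph (d : ℕ) : Type := Metric.sphere (0 : EuclideanSpace ℝ (Fin d)) 1

variable {d : ℕ}

/-- The bilinear form `⟨x, A y⟩` for the diagonal matrix `A = diag lam`. -/
def qA (lam : Fin d → ℝ) (x y : EuclideanSpace ℝ (Fin d)) : ℝ :=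
  ∑ i, lam i * x i * y i

/-- The interaction kernel `K_A(x,y) = exp ⟨x, A y⟩`. -/
def Kker (lam : Fin d → ℝ) (x y : Sph d) : ℝ :=
  Real.exp (qA lam (x : EuclideanSpace ℝ (Fin d)) (y : EuclideanSpace ℝ (Fin d)))

/-- The interaction energy `I_A(μ)`. -/
def IA (lam : Fin d → ℝ) (μ : Measure (Sph d)) : ℝ :=
  ∫ x, ∫ y, Kker lam x y ∂μ ∂μ

/-- The potential `W_μ(x) = ∫ K_A(x,y) dμ(y)`. -/
def WA (lam : Fin d → ℝ) (μ : Measure (Sph d)) (x : Sph d) : ℝ :=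
  ∫ y, Kker lam x y ∂μ

open scoped Classical in
/-- Relative entropy of `μ` with respect to `ω`, with value `+∞` when `μ` is not
absolutely continuous w.r.t. `ω` or the entropy integral diverges. -/
def Ent (ω μ : Measure (Sph d)) : EReal :=
  if μ ≪ ω ∧ Integrable (fun x => Real.log (μ.rnDeriv ω x).toReal) μ
  then ((∫ x, Real.log (μ.rnDeriv ω x).toReal ∂μ : ℝ) : EReal)
  else ⊤

/-- The free energy `E_{ε,A}(μ) = ε·Ent(μ) − (1/2)·I_A(μ)`. -/
def EA (lam : Fin d → ℝ) (ω : Measure (Sph d)) (ε : ℝ) (μ : Measure (Sph d)) : EReal :=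
  (ε : EReal) * Ent ω μ - ((IA lam μ / 2 : ℝ) : EReal)

/-- The antipodal map on the sphere. -/
def antip (x : Sph d) : Sph d :=
  ⟨-(x : EuclideanSpace ℝ (Fin d)), by
    have hx := x.2
    rw [mem_sphere_zero_iff_norm] at hx ⊢
    rwa [norm_neg]⟩

/-- The sphere self-map induced by a linear isometry equivalence of `ℝ^d`. -/
def sphMap (g : EuclideanSpace ℝ (Fin d) ≃ₗᵢ[ℝ] EuclideanSpace ℝ (Fin d)) (x : Sph d) : Sph d :=
  ⟨g (x : EuclideanSpace ℝ (Fin d)), by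
    have hx := x.2
    rw [mem_sphere_zero_iff_norm] at hx ⊢
    rwa [g.norm_map]⟩

/-- `ω` is the uniform probability measure on the sphere, characterised as a
rotation-invariant Borel probability measure. -/
def IsUniform (ω : Measure (Sph d)) : Prop :=
  IsProbabilityMeasure ω ∧
  ∀ g : EuclideanSpace ℝ (Fin d) ≃ₗᵢ[ℝ] EuclideanSpace ℝ (Fin d),
    Measure.map (sphMap g) ω = ω

/-- The (topological) support of a measure. -/
def msupport (μ : Measure (Sph d)) : Set (Sph d) :=
  {x | ∀ U : Set (Sph d), IsOpen U → x ∈ U → 0 < μ U}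

/-- The set of global maximizers of the potential `W_ν`. -/
def argmaxW (lam : Fin d → ℝ) (ν : Measure (Sph d)) : Set (Sph d) :=
  {x | ∀ y, WA lam ν y ≤ WA lam ν x}

/-- `μ` is a Gibbs critical point of `E_{ε,A}`. -/
def IsGibbs (lam : Fin d → ℝ) (ω : Measure (Sph d)) (ε : ℝ) (μ : Measure (Sph d)) : Prop :=
  IsProbabilityMeasure μ ∧
  μ = ω.withDensity (fun x => ENNReal.ofReal
    (Real.exp (WA lam μ x / ε) / ∫ z, Real.exp (WA lam μ z / ε) ∂ω))

/-- `μ` is a global minimizer of `E_{ε,A}` over Borel probability measures. -/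
def IsMinimizer (lam : Fin d → ℝ) (ω : Measure (Sph d)) (ε : ℝ) (μ : Measure (Sph d)) : Prop :=
  IsProbabilityMeasure μ ∧
  ∀ ν : Measure (Sph d), IsProbabilityMeasure ν → EA lam ω ε μ ≤ EA lam ω ε ν

/-- `m_ε`, the infimum of the free energy over probability measures. -/
def mEps (lam : Fin d → ℝ) (ω : Measure (Sph d)) (ε : ℝ) : EReal :=
  sInf {r : EReal | ∃ μ : Measure (Sph d), IsProbabilityMeasure μ ∧ EA lam ω ε μ = r}

section MixedEnergy

variable {X : Type*} [MeasurableSpace X]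

def mixedEnergy (K : X → X → ℝ) (μ ρ : Measure X) : ℝ :=
  ∫ x, ∫ y, K x y ∂ρ ∂μ

theorem hasSum_integral_of_abs_le_summable {μ : Measure X} [IsFiniteMeasure μ]
    {F : ℕ → X → ℝ} {f : X → ℝ} {a : ℕ → ℝ} (hF : ∀ n, AEStronglyMeasurable (F n) μ)
    (hFa : ∀ n x, |F n x| ≤ a n) (ha : Summable a) (hFf : ∀ x, HasSum (F · x) (f x)) :
    HasSum (fun n => ∫ x, F n x ∂μ) (∫ x, f x ∂μ) :=
  hasSum_integral_of_dominated_convergence (fun n _ => a n) hF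
    (fun n => .of_forall (hFa n)) (.of_forall fun _ => ha) (integrable_const _)
    (.of_forall hFf)

theorem hasSum_mixedEnergy {μ ρ : Measure X} [IsFiniteMeasure μ] [IsFiniteMeasure ρ]
    {k : ℕ → X → X → ℝ} {K : X → X → ℝ} {a : ℕ → ℝ}
    (hk : ∀ n, StronglyMeasurable (Function.uncurry (k n)))
    (hka : ∀ n x y, |k n x y| ≤ a n) (ha : Summable a)
    (hkK : ∀ x y, HasSum (k · x y) (K x y)) :
    HasSum (fun n => mixedEnergy (k n) μ ρ) (mixedEnergy K μ ρ) := by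
  refine hasSum_integral_of_abs_le_summable (a := fun n => a n * ρ.real Set.univ)
    (fun n => (hk n).integral_prod_right'.aestronglyMeasurable) (fun n x => ?_)
    (ha.mul_right _) (fun x => ?_)
  · simpa using norm_integral_le_of_norm_le_const (μ := ρ)
      (.of_forall fun y => (Real.norm_eq_abs _).trans_le (hka n x y))
  · exact hasSum_integral_of_abs_le_summable
      (fun n => ((hk n).comp_measurable measurable_prodMk_left).aestronglyMeasurable)
      (hka · x) ha (hkK x)

theorem mixedEnergy_sum_mul {ι : Type*} {μ ρ : Measure X} (s : Finset ι) (c : ι → ℝ)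
    {g : ι → X → ℝ} (hgμ : ∀ i ∈ s, Integrable (g i) μ) (hgρ : ∀ i ∈ s, Integrable (g i) ρ) :
    mixedEnergy (fun x y => ∑ i ∈ s, c i * (g i x * g i y)) μ ρ
      = ∑ i ∈ s, c i * ((∫ x, g i x ∂μ) * ∫ y, g i y ∂ρ) := by
  have inner (x : X) : ∫ y, ∑ i ∈ s, c i * (g i x * g i y) ∂ρ
      = ∑ i ∈ s, c i * ((∫ y, g i y ∂ρ) * g i x) := by
    rw [integral_finsetSum s fun i hi => ((hgρ i hi).const_mul (g i x)).const_mul (c i)]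
    simp_rw [integral_const_mul, mul_comm (g _ x)]
  simp_rw [mixedEnergy, inner]
  rw [integral_finsetSum s fun i hi => ((hgμ i hi).const_mul _).const_mul (c i)]
  simp_rw [integral_const_mul, mul_comm (∫ y, g _ y ∂ρ)]

theorem two_mul_mixedEnergy_le_of_eq_sum_mul {ι : Type*} {μ ρ : Measure X} {K : X → X → ℝ}
    (s : Finset ι) {c : ι → ℝ} (hc : ∀ i ∈ s, 0 ≤ c i) {g : ι → X → ℝ}
    (hgμ : ∀ i ∈ s, Integrable (g i) μ) (hgρ : ∀ i ∈ s, Integrable (g i) ρ)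
    (hK : K = fun x y => ∑ i ∈ s, c i * (g i x * g i y)) :
    2 * mixedEnergy K μ ρ ≤ mixedEnergy K μ μ + mixedEnergy K ρ ρ := by
  rw [hK, mixedEnergy_sum_mul s c hgμ hgρ, mixedEnergy_sum_mul s c hgμ hgμ,
    mixedEnergy_sum_mul s c hgρ hgρ, Finset.mul_sum, ← Finset.sum_add_distrib]
  refine Finset.sum_le_sum fun i hi => ?_
  nlinarith [mul_nonneg (hc i hi) (sq_nonneg ((∫ x, g i x ∂μ) - ∫ x, g i x ∂ρ))]

theorem two_mul_mixedEnergy_le_of_hasSum {μ ρ : Measure X} [IsFiniteMeasure μ]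
    [IsFiniteMeasure ρ] {k : ℕ → X → X → ℝ} {K : X → X → ℝ} {a : ℕ → ℝ}
    (hk : ∀ n, StronglyMeasurable (Function.uncurry (k n)))
    (hka : ∀ n x y, |k n x y| ≤ a n) (ha : Summable a)
    (hkK : ∀ x y, HasSum (k · x y) (K x y))
    (hk_le : ∀ n, 2 * mixedEnergy (k n) μ ρ ≤ mixedEnergy (k n) μ μ + mixedEnergy (k n) ρ ρ) :
    2 * mixedEnergy K μ ρ ≤ mixedEnergy K μ μ + mixedEnergy K ρ ρ :=
  hasSum_le hk_le ((hasSum_mixedEnergy hk hka ha hkK).mul_left 2)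
    ((hasSum_mixedEnergy hk hka ha hkK).add (hasSum_mixedEnergy hk hka ha hkK))

end MixedEnergy

theorem abs_coord_le_one (x : Sph d) (i : Fin d) : |(x : EuclideanSpace ℝ (Fin d)) i| ≤ 1 := by
  simpa [← Real.norm_eq_abs] using PiLp.norm_apply_le (x : EuclideanSpace ℝ (Fin d)) i

theorem abs_qA_le (lam : Fin d → ℝ) (hlam : ∀ i, 0 ≤ lam i) (x y : Sph d) :
    |qA lam (x : EuclideanSpace ℝ (Fin d)) y| ≤ ∑ i, lam i := by
  refine (Finset.abs_sum_le_sum_abs _ _).trans (Finset.sum_le_sum fun i _ => ?_)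
  rw [abs_mul, abs_mul, abs_of_nonneg (hlam i)]
  have := hlam i
  calc lam i * |(x : EuclideanSpace ℝ (Fin d)) i| * |(y : EuclideanSpace ℝ (Fin d)) i|
      ≤ lam i * 1 * 1 := by gcongr <;> exact abs_coord_le_one _ i
    _ = lam i := by ring

theorem qA_pow (lam : Fin d → ℝ) (x y : EuclideanSpace ℝ (Fin d)) (n : ℕ) :
    qA lam x y ^ n
      = ∑ p : Fin n → Fin d, (∏ j, lam (p j)) * ((∏ j, x (p j)) * ∏ j, y (p j)) := by
  rw [qA, ← Fin.prod_const, Finset.prod_univ_sum]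
  simp_rw [Finset.prod_mul_distrib, mul_assoc]
  rfl

theorem continuous_qA (lam : Fin d → ℝ) :
    Continuous fun z : Sph d × Sph d =>
      qA lam (z.1 : EuclideanSpace ℝ (Fin d)) (z.2 : EuclideanSpace ℝ (Fin d)) := by
  unfold qA
  fun_prop

theorem hasSum_Kker (lam : Fin d → ℝ) (x y : Sph d) :
    HasSum (fun n : ℕ => qA lam (x : EuclideanSpace ℝ (Fin d)) y ^ n / n.factorial)
      (Kker lam x y) := by
  rw [Kker, Real.exp_eq_exp_ℝ]
  exact NormedSpace.expSeries_div_hasSum_exp _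

theorem two_mul_mixedEnergy_Kker_le (lam : Fin d → ℝ) (hlam : ∀ i, 0 ≤ lam i)
    (μ ρ : Measure (Sph d)) [IsFiniteMeasure μ] [IsFiniteMeasure ρ] :
    2 * mixedEnergy (Kker lam) μ ρ ≤ mixedEnergy (Kker lam) μ μ + mixedEnergy (Kker lam) ρ ρ := by
  refine two_mul_mixedEnergy_le_of_hasSum
    (k := fun n (x y : Sph d) => qA lam (x : EuclideanSpace ℝ (Fin d)) y ^ n / n.factorial)
    (a := fun n => (∑ i, lam i) ^ n / n.factorial)
    (fun n => (((continuous_qA lam).pow n).div_const _).stronglyMeasurable) (fun n x y => ?_)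
    (Real.summable_pow_div_factorial _) (hasSum_Kker lam) (fun n => ?_)
  · rw [abs_div, abs_pow, Nat.abs_cast]
    gcongr
    exact abs_qA_le lam hlam x y
  · have hmonomial (p : Fin n → Fin d) (ν : Measure (Sph d)) [IsFiniteMeasure ν] :
        Integrable (fun x : Sph d => ∏ j, (x : EuclideanSpace ℝ (Fin d)) (p j)) ν :=
      Continuous.integrable_of_hasCompactSupport (by fun_prop) (.of_compactSpace _)
    refine two_mul_mixedEnergy_le_of_eq_sum_mul Finset.univ
      (c := fun p => (∏ j, lam (p j)) / n.factorial)
      (fun p _ => div_nonneg (Finset.prod_nonneg fun j _ => hlam (p j)) n.factorial.cast_nonneg)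
      (fun p _ => hmonomial p μ) (fun p _ => hmonomial p ρ) ?_
    funext x y
    simp_rw [qA_pow, Finset.sum_div, div_mul_eq_mul_div]

theorem integral_eq_of_eqOn_support {X : Type*} [TopologicalSpace X] [HereditarilyLindelofSpace X]
    [MeasurableSpace X] {μ : Measure X} [IsProbabilityMeasure μ] {f : X → ℝ} {c : ℝ}
    (hf : Set.EqOn f (fun _ => c) μ.support) : ∫ x, f x ∂μ = c := by
  rw [integral_congr_ae (Filter.mem_of_superset Measure.support_mem_ae hf), integral_const]
  simp

theorem msupport_eq_support (μ : Measure (Sph d)) : msupport μ = μ.support := by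
  rw [Measure.support_eq_forall_isOpen]
  ext x
  exact ⟨fun h U hxU hU => h U hU hxU, fun h U hU hxU => h U hxU hU⟩

/-- support minimality inside the max-support class. -/
theorem stmt4 (d : ℕ) (lam : Fin d → ℝ)
    (hpos : ∀ i, 0 < lam i)
    (ν : Measure (Sph d)) (hν : IsProbabilityMeasure ν)
    (hsupp : msupport ν ⊆ argmaxW lam ν)
    (η : Measure (Sph d)) (hη : IsProbabilityMeasure η)
    (hηsupp : msupport η ⊆ msupport ν) :
    IA lam ν ≤ IA lam η := by
  simp only [msupport_eq_support] at hsupp hηsupp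
  obtain ⟨x₀, hx₀⟩ := Measure.nonempty_support (IsProbabilityMeasure.ne_zero ν)
  have hW : Set.EqOn (WA lam ν) (fun _ => WA lam ν x₀) ν.support :=
    fun x hx => le_antisymm (hsupp hx₀ x) (hsupp hx x₀)
  have hIν : mixedEnergy (Kker lam) ν ν = WA lam ν x₀ := integral_eq_of_eqOn_support hW
  have hcross : mixedEnergy (Kker lam) η ν = WA lam ν x₀ :=
    integral_eq_of_eqOn_support (hW.mono hηsupp)
  have hpd := two_mul_mixedEnergy_Kker_le lam (fun i => (hpos i).le) η ν
  change mixedEnergy (Kker lam) ν ν ≤ mixedEnergy (Kker lam) η η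
  linarith

end
end

section
/- Let (ε_n) be a sequence of positive reals with ε_n → 0, and for each n let μ_n be a Gibbs critical point of E_{ε_n,A}, i.e., μ_n = ρ_n ω with ρ_n(x) = exp(W_{μ_n}(x)/ε_n) / ∫_S exp(W_{μ_n}(z)/ε_n) dω(z) for all x ∈ S. If μ_n converges weakly (narrowly) to a probability measure ν, then the support of ν is contained in the set of global maximizers of W_ν on S. -/
open MeasureTheory Real Filter Topology

noncomputable section

variable {d : ℕ}

/-!
Suppose `x₀ ∈ supp ν` but `W_ν(x₀) < W_ν(y₀)`. The potentials `W_{μ_n}` are equicontinuous (the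
kernel is uniformly continuous on the compact `S × S`) and converge pointwise to `W_ν`, so for large
`n` they are smaller by a fixed gap `g` on a ball around `x₀` than on a ball around `y₀`. Comparing
Gibbs densities `exp(W_{μ_n}/ε_n)` on the two balls gives
`μ_n(ball x₀) ≤ exp(-g/ε_n) / ω(ball y₀) → 0`, and the ball around `y₀` has positive `ω`-mass by
rotation invariance. The portmanteau theorem then gives `ν(ball x₀) ≤ liminf μ_n(ball x₀) = 0`,
contradicting `x₀ ∈ supp ν`.
-/

open scoped BoundedContinuousFunction

lemma continuous_uncurry_Kker (lam : Fin d → ℝ) : Continuous (Function.uncurry (Kker lam)) := by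
  unfold Kker qA
  fun_prop

lemma continuous_WA (lam : Fin d → ℝ) (μ : Measure (Sph d)) [IsFiniteMeasure μ] :
    Continuous (WA lam μ) := by
  have h := continuous_parametric_integral_of_continuous (μ := μ)
    (continuous_uncurry_Kker lam) isCompact_univ
  rw [Measure.restrict_univ] at h
  exact h

lemma uniformEquicontinuous_integral_of_continuous {X ι : Type*} [MetricSpace X]
    [CompactSpace X] [MeasurableSpace X] [OpensMeasurableSpace X] {K : X → X → ℝ}
    (hK : Continuous (Function.uncurry K)) (μ : ι → Measure X)
    [∀ i, IsProbabilityMeasure (μ i)] :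
    UniformEquicontinuous fun i x => ∫ y, K x y ∂μ i := by
  rw [Metric.uniformEquicontinuous_iff]
  intro ε hε
  obtain ⟨δ, hδ, hKδ⟩ := Metric.uniformContinuous_iff.1
    (CompactSpace.uniformContinuous_of_continuous hK) (ε / 2) (half_pos hε)
  refine ⟨δ, hδ, fun x x' hxx' i => ?_⟩
  have hint : ∀ x, Integrable (K x) (μ i) := fun x =>
    (hK.comp (Continuous.prodMk_right x)).integrable_of_hasCompactSupport
      (HasCompactSupport.of_compactSpace _)
  calc dist (∫ y, K x y ∂μ i) (∫ y, K x' y ∂μ i)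
      = ‖∫ y, (K x y - K x' y) ∂μ i‖ := by
        rw [dist_eq_norm, integral_sub (hint x) (hint x')]
    _ ≤ ε / 2 * (μ i).real Set.univ := by
        refine norm_integral_le_of_norm_le_const (ae_of_all _ fun y => ?_)
        have hxy : dist (x, y) (x', y) < δ := by simpa [Prod.dist_eq] using hxx'
        simpa [dist_eq_norm] using (hKδ hxy).le
    _ = ε / 2 := by simp
    _ < ε := half_lt_self hε

lemma exists_pos_eventually_forall_ball_dist_lt {ι X : Type*} [PseudoMetricSpace X]
    {F : ι → X → ℝ} {l : Filter ι} {x : X} {a δ : ℝ} (hF : EquicontinuousAt F x)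
    (hx : Tendsto (F · x) l (𝓝 a)) (hδ : 0 < δ) :
    ∃ r > 0, ∀ᶠ i in l, ∀ y ∈ Metric.ball x r, dist (F i y) a < δ := by
  obtain ⟨r, hr, hFr⟩ := Metric.equicontinuousAt_iff.1 hF (δ / 2) (half_pos hδ)
  refine ⟨r, hr, ?_⟩
  filter_upwards [hx (Metric.ball_mem_nhds a (half_pos hδ))] with i hi y hy
  calc dist (F i y) a ≤ dist (F i x) (F i y) + dist (F i x) a := dist_triangle_left _ _ _
    _ < δ / 2 + δ / 2 := add_lt_add (hFr y hy i) hi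
    _ = δ := add_halves δ

lemma continuous_sphMap (g : EuclideanSpace ℝ (Fin d) ≃ₗᵢ[ℝ] EuclideanSpace ℝ (Fin d)) :
    Continuous (sphMap g) :=
  (g.continuous.comp continuous_subtype_val).subtype_mk _

lemma IsUniform.measure_ball_pos {ω : Measure (Sph d)} (hω : IsUniform ω) (y : Sph d) {r : ℝ}
    (hr : 0 < r) : 0 < ω (Metric.ball y r) := by
  obtain ⟨hprob, hinv⟩ := hω
  have htrans : ∀ z : Sph d, ∃ g, sphMap g z = y := fun z =>
    ⟨_, Subtype.ext (Submodule.reflection_sub (by simp [norm_eq_of_mem_sphere]))⟩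
  choose g hg using htrans
  have hpre : ∀ z, ω (sphMap (g z) ⁻¹' Metric.ball y r) = ω (Metric.ball y r) := fun z => by
    rw [← Measure.map_apply (continuous_sphMap (g z)).measurable measurableSet_ball, hinv]
  -- the rotated copies of the ball cover the compact sphere, so a null ball would make `ω` null
  obtain ⟨t, ht⟩ := isCompact_univ.elim_finite_subcover
    (fun z => sphMap (g z) ⁻¹' Metric.ball y r)
    (fun z => Metric.isOpen_ball.preimage (continuous_sphMap (g z)))
    (fun z _ => Set.mem_iUnion.2 ⟨z, by simp [hg z, hr]⟩)
  by_contra h0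
  rw [not_lt, nonpos_iff_eq_zero] at h0
  have hcover := (measure_mono (μ := ω) ht).trans (measure_biUnion_finset_le t _)
  simp [hpre, h0] at hcover

lemma withDensity_exp_div_integral_apply_le {X : Type*} [MeasurableSpace X] {ω : Measure X}
    [IsFiniteMeasure ω] {ψ : X → ℝ} (hψ : Integrable (fun x => Real.exp (ψ x)) ω)
    {B B' : Set X} (hB : MeasurableSet B) (hB' : MeasurableSet B') (hB'pos : 0 < ω B')
    {s t : ℝ} (hs : ∀ x ∈ B, ψ x ≤ s) (ht : ∀ x ∈ B', t ≤ ψ x) :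
    ω.withDensity (fun x => ENNReal.ofReal (Real.exp (ψ x) / ∫ z, Real.exp (ψ z) ∂ω)) B ≤
      ENNReal.ofReal (Real.exp (s - t) / ω.real B') * ω B := by
  set Z := ∫ z, Real.exp (ψ z) ∂ω
  have hB'real : 0 < ω.real B' := ENNReal.toReal_pos hB'pos.ne' (measure_ne_top ω B')
  have hZ : Real.exp t * ω.real B' ≤ Z :=
    calc Real.exp t * ω.real B' = ∫ _ in B', Real.exp t ∂ω := by
          rw [setIntegral_const, smul_eq_mul, mul_comm]
      _ ≤ ∫ z in B', Real.exp (ψ z) ∂ω :=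
          setIntegral_mono_on (integrable_const _).integrableOn hψ.integrableOn hB'
            fun z hz => Real.exp_le_exp.2 (ht z hz)
      _ ≤ Z := setIntegral_le_integral hψ (ae_of_all _ fun z => (Real.exp_pos _).le)
  have hZpos : 0 < Z := (mul_pos (Real.exp_pos t) hB'real).trans_le hZ
  rw [withDensity_apply _ hB]
  calc ∫⁻ x in B, ENNReal.ofReal (Real.exp (ψ x) / Z) ∂ω
      ≤ ∫⁻ _ in B, ENNReal.ofReal (Real.exp s / Z) ∂ω :=
        setLIntegral_mono' hB fun x hx => ENNReal.ofReal_le_ofReal <|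
          div_le_div_of_nonneg_right (Real.exp_le_exp.2 (hs x hx)) hZpos.le
    _ = ENNReal.ofReal (Real.exp s / Z) * ω B := setLIntegral_const _ _
    _ ≤ ENNReal.ofReal (Real.exp (s - t) / ω.real B') * ω B := by
        refine mul_le_mul_left (ENNReal.ofReal_le_ofReal ?_) _
        calc Real.exp s / Z ≤ Real.exp s / (Real.exp t * ω.real B') :=
              div_le_div_of_nonneg_left (Real.exp_pos s).le (by positivity) hZ
          _ = Real.exp (s - t) / ω.real B' := by rw [Real.exp_sub, div_div]

lemma IsGibbs.measure_le {lam : Fin d → ℝ} {ω μ : Measure (Sph d)} [IsProbabilityMeasure ω]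
    {ε : ℝ} (hμ : IsGibbs lam ω ε μ) (hε : 0 < ε) {B B' : Set (Sph d)} (hB : MeasurableSet B)
    (hB' : MeasurableSet B') (hB'pos : 0 < ω B') {s t : ℝ} (hs : ∀ x ∈ B, WA lam μ x ≤ s)
    (ht : ∀ x ∈ B', t ≤ WA lam μ x) :
    μ B ≤ ENNReal.ofReal (Real.exp ((s - t) / ε) / ω.real B') := by
  obtain ⟨hprob, hdens⟩ := hμ
  have hint : Integrable (fun x => Real.exp (WA lam μ x / ε)) ω :=
    ((continuous_WA lam μ).div_const ε).rexp.integrable_of_hasCompactSupport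
      (HasCompactSupport.of_compactSpace _)
  calc μ B ≤ ENNReal.ofReal (Real.exp (s / ε - t / ε) / ω.real B') * ω B := by
        rw [hdens]
        exact withDensity_exp_div_integral_apply_le hint hB hB' hB'pos
          (fun x hx => div_le_div_of_nonneg_right (hs x hx) hε.le)
          (fun x hx => div_le_div_of_nonneg_right (ht x hx) hε.le)
    _ ≤ ENNReal.ofReal (Real.exp ((s - t) / ε) / ω.real B') := by
        rw [sub_div]
        exact mul_le_of_le_one_right' prob_le_one

lemma measure_eq_zero_of_tendsto_integral_of_tendsto_measure {Ω ι : Type*} [MeasurableSpace Ω]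
    [TopologicalSpace Ω] [OpensMeasurableSpace Ω] [HasOuterApproxClosed Ω] {L : Filter ι}
    [L.NeBot] {μ : ι → Measure Ω} [∀ i, IsProbabilityMeasure (μ i)] {ν : Measure Ω}
    [IsProbabilityMeasure ν]
    (hconv : ∀ f : Ω →ᵇ ℝ, Tendsto (fun i => ∫ x, f x ∂μ i) L (𝓝 (∫ x, f x ∂ν)))
    {G : Set Ω} (hG : IsOpen G) (hμG : Tendsto (fun i => μ i G) L (𝓝 0)) : ν G = 0 := by
  have hlim : Tendsto (β := ProbabilityMeasure Ω) (fun i => ⟨μ i, inferInstance⟩) L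
      (𝓝 (⟨ν, inferInstance⟩ : ProbabilityMeasure Ω)) :=
    ProbabilityMeasure.tendsto_iff_forall_integral_tendsto.2 hconv
  have hG := ProbabilityMeasure.le_liminf_measure_open_of_tendsto hlim hG
  simp only [ProbabilityMeasure.coe_mk, hμG.liminf_eq] at hG
  exact nonpos_iff_eq_zero.1 hG

lemma tendsto_exp_neg_div_nhds_zero {ι : Type*} {l : Filter ι} {ε : ι → ℝ}
    (hε : Tendsto ε l (𝓝[>] 0)) {c : ℝ} (hc : 0 < c) :
    Tendsto (fun i => Real.exp (-c / ε i)) l (𝓝 0) := by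
  simp only [div_eq_mul_inv]
  exact Real.tendsto_exp_atBot.comp
    ((tendsto_const_mul_atBot_of_neg (neg_neg_of_pos hc)).2 (tendsto_inv_nhdsGT_zero.comp hε))

lemma IsGibbs.tendsto_measure_zero {ι : Type*} {l : Filter ι} {lam : Fin d → ℝ}
    {ω : Measure (Sph d)} [IsProbabilityMeasure ω] {ε : ι → ℝ} (hε : Tendsto ε l (𝓝[>] 0))
    {μ : ι → Measure (Sph d)} (hμ : ∀ i, IsGibbs lam ω (ε i) (μ i)) {B B' : Set (Sph d)}
    (hB : MeasurableSet B) (hB' : MeasurableSet B') (hB'pos : 0 < ω B') {a b : ℝ} (hab : a < b)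
    (ha : ∀ᶠ i in l, ∀ x ∈ B, WA lam (μ i) x ≤ a) (hb : ∀ᶠ i in l, ∀ x ∈ B', b ≤ WA lam (μ i) x) :
    Tendsto (fun i => μ i B) l (𝓝 0) := by
  have hbound : ∀ᶠ i in l, μ i B ≤ ENNReal.ofReal (Real.exp (-(b - a) / ε i) / ω.real B') := by
    filter_upwards [ha, hb, hε self_mem_nhdsWithin] with i hai hbi hεi
    simpa only [neg_sub] using (hμ i).measure_le hεi hB hB' hB'pos hai hbi
  have hdecay : Tendsto (fun i => ENNReal.ofReal (Real.exp (-(b - a) / ε i) / ω.real B')) l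
      (𝓝 0) := by
    simpa using ENNReal.tendsto_ofReal
      ((tendsto_exp_neg_div_nhds_zero hε (sub_pos.2 hab)).div_const _)
  exact tendsto_of_tendsto_of_tendsto_of_le_of_le' tendsto_const_nhds hdecay
    (Eventually.of_forall fun _ => zero_le) hbound

/-- narrow limits of Gibbs critical points are max-support states. -/
theorem stmt5 (d : ℕ) (lam : Fin d → ℝ)
    (ω : Measure (Sph d)) (hω : IsUniform ω)
    (ε : ℕ → ℝ) (hεpos : ∀ n, 0 < ε n) (hε0 : Tendsto ε atTop (𝓝 0))
    (μ : ℕ → Measure (Sph d)) (hμ : ∀ n, IsGibbs lam ω (ε n) (μ n))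
    (ν : Measure (Sph d)) (hν : IsProbabilityMeasure ν)
    (hconv : ∀ f : Sph d → ℝ, Continuous f →
      Tendsto (fun n => ∫ x, f x ∂(μ n)) atTop (𝓝 (∫ x, f x ∂ν))) :
    msupport ν ⊆ argmaxW lam ν := by
  have hωprob := hω.1
  have hμprob := fun n => (hμ n).1
  intro x₀ hx₀ y₀
  by_contra! hlt
  set δ := (WA lam ν y₀ - WA lam ν x₀) / 3
  have hδ : 0 < δ := by simp only [δ]; linarith
  have hequi : Equicontinuous fun n => WA lam (μ n) :=
    (uniformEquicontinuous_integral_of_continuous (continuous_uncurry_Kker lam) μ).equicontinuous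
  have hW : ∀ x, Tendsto (fun n => WA lam (μ n) x) atTop (𝓝 (WA lam ν x)) := fun x =>
    hconv _ ((continuous_uncurry_Kker lam).comp (Continuous.prodMk_right x))
  obtain ⟨r, hr, hx⟩ := exists_pos_eventually_forall_ball_dist_lt (hequi x₀) (hW x₀) hδ
  obtain ⟨r', hr', hy⟩ := exists_pos_eventually_forall_ball_dist_lt (hequi y₀) (hW y₀) hδ
  have hvanish : Tendsto (fun n => μ n (Metric.ball x₀ r)) atTop (𝓝 0) :=
    IsGibbs.tendsto_measure_zero (tendsto_nhdsWithin_iff.2 ⟨hε0, .of_forall hεpos⟩) hμ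
      measurableSet_ball measurableSet_ball (hω.measure_ball_pos y₀ hr')
      (a := WA lam ν x₀ + δ) (b := WA lam ν y₀ - δ) (by simp only [δ]; linarith)
      (hx.mono fun n hn x hx => by linarith [(abs_lt.1 (Real.dist_eq _ _ ▸ hn x hx)).2])
      (hy.mono fun n hn y hy => by linarith [(abs_lt.1 (Real.dist_eq _ _ ▸ hn y hy)).1])
  exact (hx₀ _ Metric.isOpen_ball (Metric.mem_ball_self hr)).ne'
    (measure_eq_zero_of_tendsto_integral_of_tendsto_measure (fun f => hconv f f.continuous)
      Metric.isOpen_ball hvanish)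
end
end

section
/- Let x, y ∈ S with x_1 · y_1 ≤ 0, where x_1 = ⟨x, e_1⟩ and y_1 = ⟨y, e_1⟩ are the first coordinates. Then there exists t ∈ [0,1] such that t²·exp(⟨x, A x⟩) + 2t(1−t)·exp(⟨x, A y⟩) + (1−t)²·exp(⟨y, A y⟩) ≤ max{e^{λ_2}, cosh λ_1}. -/
open MeasureTheory Real Filter Topology

noncomputable section

variable {d : ℕ}

/-! Write `u = x₁`, `v = y₁`, `M = max (e^{λ₂}, cosh λ₁)` and `D = e^{λ₁} - M`. Bounding all
coordinates but the first by `λ₂` and using convexity of `exp` gives `e^{⟨x,Ax⟩} ≤ M + u² D`,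
`e^{⟨y,Ay⟩} ≤ M + v² D` and, as `uv ≤ 0` and `e^{λ₁} + e^{-λ₁} = 2 cosh λ₁ ≤ 2M`,
`e^{⟨x,Ay⟩} ≤ M + uv D`. The two-point energy is then at most `M + D (t u + (1 - t) v)²`, and
since `u` and `v` have opposite signs some `t ∈ [0,1]` makes `t u + (1 - t) v` vanish. -/

theorem exists_mem_Icc_mul_add_one_sub_mul_eq_zero {p q : ℝ} (hpq : p * q ≤ 0) :
    ∃ t ∈ Set.Icc (0 : ℝ) 1, t * p + (1 - t) * q = 0 := by
  have hsign : (0 : ℝ) ∈ Set.uIcc q p := by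
    rw [Set.mem_uIcc]
    rcases le_or_gt p 0 with hp | hp
    · rcases le_or_gt 0 q with hq | hq
      · exact Or.inr ⟨hp, hq⟩
      · exact Or.inl ⟨hq.le, by nlinarith⟩
    · exact Or.inl ⟨by nlinarith, hp.le⟩
  have hf : Continuous fun t : ℝ => t * p + (1 - t) * q := by fun_prop
  obtain ⟨t, ht, hroot⟩ :=
    intermediate_value_uIcc (a := 0) (b := 1) hf.continuousOn (by simpa using hsign)
  rw [Set.uIcc_of_le zero_le_one] at ht
  exact ⟨t, ht, hroot⟩

theorem exists_mem_Icc_two_point_le {a b c M D p q : ℝ} (hpq : p * q ≤ 0)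
    (ha : a ≤ M + p ^ 2 * D) (hb : b ≤ M + p * q * D) (hc : c ≤ M + q ^ 2 * D) :
    ∃ t ∈ Set.Icc (0 : ℝ) 1, t ^ 2 * a + 2 * t * (1 - t) * b + (1 - t) ^ 2 * c ≤ M := by
  obtain ⟨t, ⟨ht0, ht1⟩, hroot⟩ := exists_mem_Icc_mul_add_one_sub_mul_eq_zero hpq
  refine ⟨t, ⟨ht0, ht1⟩, ?_⟩
  have hmid : 0 ≤ 2 * t * (1 - t) := by nlinarith
  calc t ^ 2 * a + 2 * t * (1 - t) * b + (1 - t) ^ 2 * c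
      ≤ t ^ 2 * (M + p ^ 2 * D) + 2 * t * (1 - t) * (M + p * q * D)
          + (1 - t) ^ 2 * (M + q ^ 2 * D) := by gcongr
    _ = M + D * (t * p + (1 - t) * q) ^ 2 := by ring
    _ = M := by rw [hroot]; ring

theorem exp_convexComb_le {α β s M : ℝ} (hα : exp α ≤ M) (hs0 : 0 ≤ s) (hs1 : s ≤ 1) :
    exp ((1 - s) * α + s * β) ≤ M + s * (exp β - M) := by
  have h := convexOn_exp.2 (Set.mem_univ α) (Set.mem_univ β) (sub_nonneg.2 hs1) hs0 (by ring)
  simp only [smul_eq_mul] at h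
  nlinarith [mul_le_mul_of_nonneg_left hα (sub_nonneg.2 hs1)]

section UnitVectors

variable {z : EuclideanSpace ℝ (Fin d)}

theorem sq_apply_le_one_of_norm_eq_one (hz : ‖z‖ = 1) (i : Fin d) : z i ^ 2 ≤ 1 := by
  rw [sq_le_one_iff_abs_le_one, ← Real.norm_eq_abs, ← hz]
  exact PiLp.norm_apply_le z i

theorem sum_erase_sq_of_norm_eq_one (hz : ‖z‖ = 1) (i0 : Fin d) :
    ∑ i ∈ Finset.univ.erase i0, z i ^ 2 = 1 - z i0 ^ 2 := by
  have h := Finset.add_sum_erase Finset.univ (fun i => z i ^ 2) (Finset.mem_univ i0)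
  rw [← EuclideanSpace.real_norm_sq_eq, hz] at h
  linarith

end UnitVectors

section SpectralGap

variable {lam : Fin d → ℝ} {i0 : Fin d} {μ M : ℝ} {x y : EuclideanSpace ℝ (Fin d)}

theorem qA_le_of_norm_eq_one (hlam : ∀ i ≠ i0, lam i ∈ Set.Icc 0 μ) (hx : ‖x‖ = 1)
    (hy : ‖y‖ = 1) :
    qA lam x y ≤ lam i0 * x i0 * y i0 + μ * (1 - (x i0 ^ 2 + y i0 ^ 2) / 2) := by
  have hterm : ∀ i ∈ Finset.univ.erase i0,
      lam i * x i * y i ≤ μ / 2 * x i ^ 2 + μ / 2 * y i ^ 2 := by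
    intro i hi
    obtain ⟨h0, hμ⟩ := hlam i (Finset.ne_of_mem_erase hi)
    nlinarith [mul_nonneg h0 (sq_nonneg (x i - y i)),
      mul_nonneg (sub_nonneg.2 hμ) (add_nonneg (sq_nonneg (x i)) (sq_nonneg (y i)))]
  calc qA lam x y = lam i0 * x i0 * y i0 + ∑ i ∈ Finset.univ.erase i0, lam i * x i * y i :=
        (Finset.add_sum_erase _ _ (Finset.mem_univ i0)).symm
    _ ≤ lam i0 * x i0 * y i0 +
          ∑ i ∈ Finset.univ.erase i0, (μ / 2 * x i ^ 2 + μ / 2 * y i ^ 2) := by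
        gcongr with i hi
        exact hterm i hi
    _ = lam i0 * x i0 * y i0 + μ * (1 - (x i0 ^ 2 + y i0 ^ 2) / 2) := by
        rw [Finset.sum_add_distrib, ← Finset.mul_sum, ← Finset.mul_sum,
          sum_erase_sq_of_norm_eq_one hx, sum_erase_sq_of_norm_eq_one hy]
        ring

theorem exp_qA_self_le (hlam : ∀ i ≠ i0, lam i ∈ Set.Icc 0 μ) (hM : exp μ ≤ M)
    (hx : ‖x‖ = 1) :
    exp (qA lam x x) ≤ M + x i0 ^ 2 * (exp (lam i0) - M) := by
  have hq := qA_le_of_norm_eq_one hlam hx hx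
  calc exp (qA lam x x) ≤ exp ((1 - x i0 ^ 2) * μ + x i0 ^ 2 * lam i0) :=
        exp_le_exp.2 (by linarith)
    _ ≤ M + x i0 ^ 2 * (exp (lam i0) - M) :=
        exp_convexComb_le hM (sq_nonneg _) (sq_apply_le_one_of_norm_eq_one hx i0)

theorem exp_qA_le_of_mul_nonpos (hlam : ∀ i ≠ i0, lam i ∈ Set.Icc 0 μ) (hμ : 0 ≤ μ)
    (hM : exp μ ≤ M) (hx : ‖x‖ = 1) (hy : ‖y‖ = 1) (hxy : x i0 * y i0 ≤ 0) :
    exp (qA lam x y) ≤ M + -(x i0 * y i0) * (exp (-lam i0) - M) := by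
  have hq := qA_le_of_norm_eq_one hlam hx hy
  have hx1 := sq_apply_le_one_of_norm_eq_one hx i0
  have hy1 := sq_apply_le_one_of_norm_eq_one hy i0
  have hsum : 0 ≤ μ * (x i0 + y i0) ^ 2 := mul_nonneg hμ (sq_nonneg _)
  calc exp (qA lam x y) ≤ exp ((1 - -(x i0 * y i0)) * μ + -(x i0 * y i0) * -lam i0) :=
        exp_le_exp.2 (by nlinarith)
    _ ≤ M + -(x i0 * y i0) * (exp (-lam i0) - M) :=
        exp_convexComb_le hM (by linarith) (by nlinarith [sq_nonneg (x i0 + y i0)])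

end SpectralGap

/-- two-point bound across the equator. -/
theorem stmt6 (d : ℕ) (hd : 2 ≤ d) (lam : Fin d → ℝ)
    (hanti : Antitone lam)
    (hpos : ∀ i, 0 < lam i)
    (x y : Sph d)
    (hxy : (x : EuclideanSpace ℝ (Fin d)) ⟨0, by omega⟩ *
        (y : EuclideanSpace ℝ (Fin d)) ⟨0, by omega⟩ ≤ 0) :
    ∃ t ∈ Set.Icc (0 : ℝ) 1,
      t ^ 2 * Real.exp (qA lam (x : EuclideanSpace ℝ (Fin d)) (x : EuclideanSpace ℝ (Fin d))) +
          2 * t * (1 - t) *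
            Real.exp (qA lam (x : EuclideanSpace ℝ (Fin d)) (y : EuclideanSpace ℝ (Fin d))) +
          (1 - t) ^ 2 *
            Real.exp (qA lam (y : EuclideanSpace ℝ (Fin d)) (y : EuclideanSpace ℝ (Fin d))) ≤
        max (Real.exp (lam ⟨1, by omega⟩)) (Real.cosh (lam ⟨0, by omega⟩)) := by
  set i0 : Fin d := ⟨0, by omega⟩
  set M := max (exp (lam ⟨1, by omega⟩)) (cosh (lam i0))
  have hlam : ∀ i ≠ i0, lam i ∈ Set.Icc 0 (lam ⟨1, by omega⟩) := fun i hi =>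
    ⟨(hpos i).le, hanti (Fin.mk_le_of_le_val (Nat.one_le_iff_ne_zero.2 (Fin.val_ne_of_ne hi)))⟩
  have hμ : 0 ≤ lam ⟨1, by omega⟩ := (hpos _).le
  have hE : exp (lam ⟨1, by omega⟩) ≤ M := le_max_left _ _
  have hcosh : cosh (lam i0) ≤ M := le_max_right _ _
  rw [cosh_eq] at hcosh
  have hx : ‖(x : EuclideanSpace ℝ (Fin d))‖ = 1 := norm_eq_of_mem_sphere x
  have hy : ‖(y : EuclideanSpace ℝ (Fin d))‖ = 1 := norm_eq_of_mem_sphere y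
  refine exists_mem_Icc_two_point_le (D := exp (lam i0) - M) hxy (exp_qA_self_le hlam hE hx)
    ((exp_qA_le_of_mul_nonpos hlam hμ hE hx hy hxy).trans ?_) (exp_qA_self_le hlam hE hy)
  nlinarith
end
end
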